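/- arXiv:1710.04414 — 11 statements merged into one kernel-verified Lean document; each statement's English description precedes it below -/
import Mathlib

section
/- For all n ≥ 2, b_n ≥ c_n. -/
theorem stmt_2 (p : ℝ) (hp : 0 < p) (hp' : p < 1/2)
(b c d : ℕ → ℝ)
    (hb2 : b 2 = (1 - p) / (5 - 7*p))
    (hc2 : c 2 = (1 - 2*p) / (5 - 7*p))
    (hd : ∀ n, 2 ≤ n → d n = c n*(2-p)*p + (c n)^2*(1-2*p) + (b n)^2*p*(2-3*p)
        + b n*p*(3-4*p) + b n * c n*(2-6*p+6*p^2))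
    (hbrec : ∀ n, 2 ≤ n → b (n+1) = p*(b n * c n*(2-3*p) + (b n)^2*(1-p) + (c n)^2*p) / d n)
    (hcrec : ∀ n, 2 ≤ n → c (n+1) = p*(b n * c n + (c n)^2*(1-p) + (b n)^2*(1-2*p)) / d n)
    (hpos : ∀ n, 2 ≤ n → 0 < b n ∧ 0 < c n ∧ 0 < d n) :
    ∀ n, 2 ≤ n → c n ≤ b n := by
  intro n hn
  induction n, hn using Nat.le_induction with
  | base =>
    rw [hb2, hc2]
    have h5 : (0:ℝ) < 5 - 7*p := by linarith
    rw [div_le_div_iff₀ h5 h5]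
    nlinarith
  | succ n hn ih =>
    obtain ⟨hbp, hcp, hdp⟩ := hpos n hn
    rw [hbrec n hn, hcrec n hn, div_le_div_iff₀ hdp hdp]
    have key : 0 ≤ (b n - c n) * (p * b n + (1 - 2*p) * c n) := by
      apply mul_nonneg (by linarith)
      nlinarith
    nlinarith [mul_nonneg (mul_nonneg hp.le hdp.le) key]
end

section
/- The sequence (b_n)_{n≥2} is monotonically decreasing: b_{n+1} ≤ b_n for all n ≥ 2. -/
theorem stmt_4 (p : ℝ) (hp : 0 < p) (hp' : p < 1/2)
(b c d : ℕ → ℝ)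
    (hb2 : b 2 = (1 - p) / (5 - 7*p))
    (hc2 : c 2 = (1 - 2*p) / (5 - 7*p))
    (hd : ∀ n, 2 ≤ n → d n = c n*(2-p)*p + (c n)^2*(1-2*p) + (b n)^2*p*(2-3*p)
        + b n*p*(3-4*p) + b n * c n*(2-6*p+6*p^2))
    (hbrec : ∀ n, 2 ≤ n → b (n+1) = p*(b n * c n*(2-3*p) + (b n)^2*(1-p) + (c n)^2*p) / d n)
    (hcrec : ∀ n, 2 ≤ n → c (n+1) = p*(b n * c n + (c n)^2*(1-p) + (b n)^2*(1-2*p)) / d n)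
    (hpos : ∀ n, 2 ≤ n → 0 < b n ∧ 0 < c n ∧ 0 < d n)
    (hbc : ∀ n, 2 ≤ n → c n ≤ b n) :
    ∀ n, 2 ≤ n → b (n+1) ≤ b n := by
  intro n hn
  obtain ⟨hbpos, hcpos, hdpos⟩ := hpos n hn
  have hbc' := hbc n hn
  rw [hbrec n hn, div_le_iff₀ hdpos, hd n hn]
  have h1 : 0 ≤ b n * (c n)^2 * (1 - 2*p) :=
    mul_nonneg (by positivity) (by linarith)
  have h2 : 0 ≤ (b n)^3 * (p * (2 - 3*p)) :=
    mul_nonneg (by positivity) (mul_nonneg hp.le (by linarith))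
  have h3 : 0 ≤ (b n)^2 * (p * (2 - 3*p)) :=
    mul_nonneg (by positivity) (mul_nonneg hp.le (by linarith))
  have h4 : 0 ≤ (b n)^2 * c n * (2 - 6*p + 6*p^2) :=
    mul_nonneg (by positivity) (by nlinarith [sq_nonneg (2*p-1)])
  have h5 : 0 ≤ c n * p^2 * (2 * b n - c n) :=
    mul_nonneg (by positivity) (by linarith)
  nlinarith [h1, h2, h3, h4, h5]
end

section
/- If 0 < p ≤ 1/3, then β_n ≤ 2/5 for all n ≥ 2. -/
theorem stmt_5 (p : ℝ) (hp : 0 < p) (hp' : p ≤ 1/3)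
(b c d : ℕ → ℝ)
    (hb2 : b 2 = (1 - p) / (5 - 7*p))
    (hc2 : c 2 = (1 - 2*p) / (5 - 7*p))
    (hd : ∀ n, 2 ≤ n → d n = c n*(2-p)*p + (c n)^2*(1-2*p) + (b n)^2*p*(2-3*p)
        + b n*p*(3-4*p) + b n * c n*(2-6*p+6*p^2))
    (hbrec : ∀ n, 2 ≤ n → b (n+1) = p*(b n * c n*(2-3*p) + (b n)^2*(1-p) + (c n)^2*p) / d n)
    (hcrec : ∀ n, 2 ≤ n → c (n+1) = p*(b n * c n + (c n)^2*(1-p) + (b n)^2*(1-2*p)) / d n)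
    (β : ℕ → ℝ)
    (hβ2 : β 2 = (1 - p) / (5 - 7*p))
    (hβrec : ∀ n, 2 ≤ n → β (n+1) = (b n + c n)*(1-p)*p / d n)
    (hpos : ∀ n, 2 ≤ n → 0 < b n ∧ 0 < c n ∧ 0 < d n)
    (hbc : ∀ n, 2 ≤ n → c n ≤ b n) :
    ∀ n, 2 ≤ n → β n ≤ 2/5 := by
  intro n hn
  rcases eq_or_lt_of_le hn with h | h
  · rw [← h, hβ2]
    rw [div_le_iff₀ (by linarith : (0:ℝ) < 5 - 7*p)]
    linarith
  · obtain ⟨m, rfl⟩ : ∃ m, n = m + 1 := ⟨n - 1, by omega⟩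
    have hm : 2 ≤ m := by omega
    obtain ⟨hbm, hcm, hdm⟩ := hpos m hm
    have hbcm := hbc m hm
    rw [hβrec m hm, div_le_iff₀ hdm, hd m hm]
    nlinarith [mul_nonneg (mul_nonneg hp.le (by linarith : (0:ℝ) ≤ 1 - 3*p)) (by linarith : (0:ℝ) ≤ b m - c m),
      mul_nonneg (mul_nonneg hcm.le hcm.le) (by linarith : (0:ℝ) ≤ 1 - 2*p),
      mul_nonneg (mul_nonneg (mul_nonneg hbm.le hbm.le) hp.le) (by linarith : (0:ℝ) ≤ 2 - 3*p),
      mul_nonneg (mul_nonneg hbm.le hcm.le) (by nlinarith : (0:ℝ) ≤ 2 - 6*p + 6*p^2)]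
end

section
/- If 1/3 ≤ p < 1/2, then α_n ≥ 2/5 for all n ≥ 2. -/
theorem stmt_6 (p : ℝ) (hp : 1/3 ≤ p) (hp' : p < 1/2)
(b c d : ℕ → ℝ)
    (hb2 : b 2 = (1 - p) / (5 - 7*p))
    (hc2 : c 2 = (1 - 2*p) / (5 - 7*p))
    (hd : ∀ n, 2 ≤ n → d n = c n*(2-p)*p + (c n)^2*(1-2*p) + (b n)^2*p*(2-3*p)
        + b n*p*(3-4*p) + b n * c n*(2-6*p+6*p^2))
    (hbrec : ∀ n, 2 ≤ n → b (n+1) = p*(b n * c n*(2-3*p) + (b n)^2*(1-p) + (c n)^2*p) / d n)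
    (hcrec : ∀ n, 2 ≤ n → c (n+1) = p*(b n * c n + (c n)^2*(1-p) + (b n)^2*(1-2*p)) / d n)
    (α : ℕ → ℝ)
    (hα2 : α 2 = (3 - 4*p) / (5 - 7*p))
    (hαrec : ∀ n, 2 ≤ n → α (n+1) = ((b n + c n)*(1-p)*p + (c n)^2*(1-2*p)
        + (b n)^2*p*(2-3*p) + b n * c n*(2 - 6*p*(1-p))) / d n)
    (hpos : ∀ n, 2 ≤ n → 0 < b n ∧ 0 < c n ∧ 0 < d n)
    (hbc : ∀ n, 2 ≤ n → c n ≤ b n) :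
    ∀ n, 2 ≤ n → 2/5 ≤ α n := by
  intro n hn
  rcases eq_or_lt_of_le hn with h2 | h3
  · rw [← h2, hα2, le_div_iff₀ (by linarith)]
    nlinarith
  · obtain ⟨m, rfl⟩ : ∃ m, n = m + 1 := ⟨n - 1, by omega⟩
    have hm : 2 ≤ m := by omega
    obtain ⟨hbpos, hcpos, hdpos⟩ := hpos m hm
    have hbcm := hbc m hm
    rw [hαrec m hm, le_div_iff₀ hdpos, hd m hm]
    nlinarith [mul_nonneg (mul_nonneg (le_of_lt (by linarith : (0:ℝ) < p))
      (by linarith : (0:ℝ) ≤ 3*p - 1)) (by linarith : (0:ℝ) ≤ b m - c m),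
      mul_pos hbpos hcpos, sq_nonneg (b m), sq_nonneg (c m),
      mul_pos (mul_pos hbpos hcpos) (by nlinarith [sq_nonneg (2*p-1)] : (0:ℝ) < 2 - 6*p + 6*p^2),
      mul_nonneg (sq_nonneg (c m)) (by linarith : (0:ℝ) ≤ 1 - 2*p),
      mul_nonneg (mul_nonneg (sq_nonneg (b m)) (by linarith : (0:ℝ) ≤ p))
        (by linarith : (0:ℝ) ≤ 2 - 3*p)]
end

section
/- For all n ≥ 2, |b_n/c_n - 1| ≤ ((b₂ - c₂)/c₂)·(1-p)^{n-2}; consequently b_n/c_n → 1 as n → ∞. -/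
theorem stmt_10 (p : ℝ) (hp : 0 < p) (hp' : p < 1/2)
(b c d : ℕ → ℝ)
    (hb2 : b 2 = (1 - p) / (5 - 7*p))
    (hc2 : c 2 = (1 - 2*p) / (5 - 7*p))
    (hd : ∀ n, 2 ≤ n → d n = c n*(2-p)*p + (c n)^2*(1-2*p) + (b n)^2*p*(2-3*p)
        + b n*p*(3-4*p) + b n * c n*(2-6*p+6*p^2))
    (hbrec : ∀ n, 2 ≤ n → b (n+1) = p*(b n * c n*(2-3*p) + (b n)^2*(1-p) + (c n)^2*p) / d n)
    (hcrec : ∀ n, 2 ≤ n → c (n+1) = p*(b n * c n + (c n)^2*(1-p) + (b n)^2*(1-2*p)) / d n)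
    (hpos : ∀ n, 2 ≤ n → 0 < b n ∧ 0 < c n ∧ 0 < d n)
    (hbc : ∀ n, 2 ≤ n → c n ≤ b n) :
    (∀ n, 2 ≤ n → |b n / c n - 1| ≤ ((b 2 - c 2) / c 2) * (1 - p)^(n - 2)) ∧
    Filter.Tendsto (fun n => b n / c n) Filter.atTop (nhds 1) := by
  have h2p : 0 < 1 - 2*p := by linarith
  have h1p : 0 < 1 - p := by linarith
  have hc2pos : 0 < c 2 := (hpos 2 le_rfl).2.1
  have key : ∀ n, 2 ≤ n → b n / c n - 1 ≤ ((b 2 - c 2) / c 2) * (1 - p)^(n - 2) := by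
    intro n hn
    induction n, hn using Nat.le_induction with
    | base =>
      have : b 2 / c 2 - 1 = (b 2 - c 2) / c 2 := by
        field_simp
      rw [this]
      simp
    | succ n hn ih =>
      obtain ⟨hbn, hcn, hdn⟩ := hpos n hn
      have hNc : 0 < b n * c n + (c n)^2*(1-p) + (b n)^2*(1-2*p) := by
        nlinarith [mul_pos hbn hcn, pow_pos hbn 2, pow_pos hcn 2]
      have hratio : b (n+1) / c (n+1)
          = (b n * c n*(2-3*p) + (b n)^2*(1-p) + (c n)^2*p)
            / (b n * c n + (c n)^2*(1-p) + (b n)^2*(1-2*p)) := by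
        rw [hbrec n hn, hcrec n hn]
        field_simp
      have hbcn := hbc n hn
      have step : b (n+1) / c (n+1) - 1 ≤ (1-p) * (b n / c n - 1) := by
        rw [hratio]
        have h1 : b n / c n - 1 = (b n - c n) / c n := by field_simp
        rw [h1, div_sub_one hNc.ne', ← mul_div_assoc]
        rw [div_le_div_iff₀ hNc hcn]
        nlinarith [mul_nonneg (mul_nonneg (sub_nonneg.2 hbcn) h2p.le) (mul_pos hbn hcn).le,
          mul_nonneg (mul_nonneg (sub_nonneg.2 hbcn) (mul_nonneg h1p.le h2p.le)) (pow_pos hbn 2).le,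
          mul_nonneg (mul_nonneg (sub_nonneg.2 hbcn) (sq_nonneg p)) (pow_pos hcn 2).le]
      have hpow : (1-p)^(n+1-2) = (1-p)^(n-2) * (1-p) := by
        have : n + 1 - 2 = (n - 2) + 1 := by omega
        rw [this, pow_succ]
      calc b (n+1) / c (n+1) - 1 ≤ (1-p) * (b n / c n - 1) := step
        _ ≤ (1-p) * (((b 2 - c 2) / c 2) * (1 - p)^(n - 2)) := by
            exact mul_le_mul_of_nonneg_left ih h1p.le
        _ = ((b 2 - c 2) / c 2) * (1 - p)^(n+1-2) := by rw [hpow]; ring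
  have nonneg : ∀ n, 2 ≤ n → 0 ≤ b n / c n - 1 := by
    intro n hn
    have hcn := (hpos n hn).2.1
    have := hbc n hn
    have : 1 ≤ b n / c n := (one_le_div hcn).2 this
    linarith
  have habs : ∀ n, 2 ≤ n → |b n / c n - 1| ≤ ((b 2 - c 2) / c 2) * (1 - p)^(n - 2) := by
    intro n hn
    rw [abs_of_nonneg (nonneg n hn)]
    exact key n hn
  refine ⟨habs, ?_⟩
  have hg : Filter.Tendsto (fun n : ℕ => ((b 2 - c 2) / c 2) * (1 - p)^(n - 2))
      Filter.atTop (nhds 0) := by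
    have h1 : Filter.Tendsto (fun n : ℕ => (1 - p)^(n - 2)) Filter.atTop (nhds 0) :=
      (tendsto_pow_atTop_nhds_zero_of_lt_one h1p.le (by linarith)).comp
        (Filter.tendsto_sub_atTop_nat 2)
    simpa using h1.const_mul ((b 2 - c 2) / c 2)
  have hf0 : Filter.Tendsto (fun n => b n / c n - 1) Filter.atTop (nhds 0) := by
    apply squeeze_zero_norm' ?_ hg
    filter_upwards [Filter.eventually_ge_atTop 2] with n hn
    simpa using habs n hn
  have := hf0.add_const 1
  simpa using this
end

section
/- The sequence (b_n) converges to 0 as n → ∞. -/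
theorem stmt_11 (p : ℝ) (hp : 0 < p) (hp' : p < 1/2)
(b c d : ℕ → ℝ)
    (hb2 : b 2 = (1 - p) / (5 - 7*p))
    (hc2 : c 2 = (1 - 2*p) / (5 - 7*p))
    (hd : ∀ n, 2 ≤ n → d n = c n*(2-p)*p + (c n)^2*(1-2*p) + (b n)^2*p*(2-3*p)
        + b n*p*(3-4*p) + b n * c n*(2-6*p+6*p^2))
    (hbrec : ∀ n, 2 ≤ n → b (n+1) = p*(b n * c n*(2-3*p) + (b n)^2*(1-p) + (c n)^2*p) / d n)
    (hcrec : ∀ n, 2 ≤ n → c (n+1) = p*(b n * c n + (c n)^2*(1-p) + (b n)^2*(1-2*p)) / d n) :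
    Filter.Tendsto b Filter.atTop (nhds 0) := by
  have h12 : (0:ℝ) < 1 - 2*p := by linarith
  have h1p : (0:ℝ) < 1 - p := by linarith
  have h57 : (0:ℝ) < 5 - 7*p := by linarith
  have h2p : (0:ℝ) < 2 - p := by linarith
  have h23 : (0:ℝ) < 2 - 3*p := by linarith
  have h34 : (0:ℝ) < 3 - 4*p := by linarith
  have h47 : (0:ℝ) < 4 - 7*p := by linarith
  have h66 : (0:ℝ) < 2 - 6*p + 6*p^2 := by nlinarith [sq_nonneg (2*p - 1)]
  have hdpos : ∀ n, 2 ≤ n → 0 < c n → c n ≤ b n → 0 < d n := by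
    intro n hn hc hcb
    have hb : 0 < b n := lt_of_lt_of_le hc hcb
    rw [hd n hn]
    positivity
  -- invariant: 0 < c n ≤ b n
  have key : ∀ n, 2 ≤ n → 0 < c n ∧ c n ≤ b n := by
    intro n hn
    induction n, hn using Nat.le_induction with
    | base =>
      refine ⟨by rw [hc2]; exact div_pos h12 h57, ?_⟩
      rw [hb2, hc2, div_le_div_iff₀ h57 h57]
      nlinarith
    | succ n hn ih =>
      obtain ⟨hc, hcb⟩ := ih
      have hb : 0 < b n := lt_of_lt_of_le hc hcb
      have hdp : 0 < d n := hdpos n hn hc hcb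
      constructor
      · rw [hcrec n hn]
        apply div_pos _ hdp
        have h1 : 0 < b n * c n + (c n)^2*(1-p) + (b n)^2*(1-2*p) := by positivity
        positivity
      · rw [hbrec n hn, hcrec n hn, div_le_div_iff₀ hdp hdp]
        apply mul_le_mul_of_nonneg_right _ hdp.le
        nlinarith [mul_nonneg (mul_nonneg (sub_nonneg.2 hcb) hp.le) (mul_pos hp hb).le,
          mul_nonneg (mul_nonneg (sub_nonneg.2 hcb) hp.le) (mul_pos h12 hc).le]
  -- contraction
  set L : ℝ := (2 - 2*p)/(2 - p) with hL
  have hL0 : 0 < L := div_pos (by linarith) h2p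
  have hL1 : L < 1 := (div_lt_one h2p).2 (by linarith)
  have contraction : ∀ n, 2 ≤ n → b (n+1) ≤ L * b n := by
    intro n hn
    obtain ⟨hc, hcb⟩ := key n hn
    have hb : 0 < b n := lt_of_lt_of_le hc hcb
    have hdp : 0 < d n := hdpos n hn hc hcb
    rw [hbrec n hn, div_le_iff₀ hdp, hL, div_mul_eq_mul_div, div_mul_eq_mul_div,
      le_div_iff₀ h2p, hd n hn]
    have ht : 0 ≤ b n - c n := sub_nonneg.2 hcb
    have h13 : (0:ℝ) < 8 - 20*p + 13*p^2 := by nlinarith [sq_nonneg (13*p - 10)]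
    have h3p2 : (0:ℝ) < 2 - 3*p^2 := by nlinarith
    nlinarith [mul_nonneg (mul_pos (mul_pos (mul_pos hc hc) hp) h1p).le h47.le,
      mul_pos (mul_pos (mul_pos (mul_pos hc hc) hc) h1p) (mul_pos h1p h1p),
      mul_nonneg (mul_nonneg (mul_nonneg ht hc.le) hp.le) h13.le,
      mul_nonneg (mul_nonneg (mul_nonneg ht (mul_pos hc hc).le) (mul_pos h1p h1p).le) (by linarith : (0:ℝ) ≤ 5 - 3*p),
      mul_nonneg (mul_nonneg (mul_nonneg (mul_nonneg ht ht) hp.le) h1p.le) h47.le,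
      mul_nonneg (mul_nonneg (mul_nonneg (mul_nonneg ht ht) hc.le) h1p.le) h3p2.le,
      mul_nonneg (mul_nonneg (mul_nonneg (mul_nonneg (mul_nonneg ht ht) ht) hp.le) h1p.le) h23.le]
  -- geometric bound: b (2+k) ≤ L^k * b 2
  have hb2pos : 0 < b 2 := lt_of_lt_of_le (key 2 le_rfl).1 (key 2 le_rfl).2
  have geo : ∀ k : ℕ, b (2 + k) ≤ L^k * b 2 := by
    intro k
    induction k with
    | zero => simp
    | succ k ih =>
      have h1 : b (2 + k + 1) ≤ L * b (2 + k) := contraction (2 + k) (by omega)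
      calc b (2 + (k+1)) = b (2 + k + 1) := by ring_nf
        _ ≤ L * b (2 + k) := h1
        _ ≤ L * (L^k * b 2) := by
            exact mul_le_mul_of_nonneg_left ih hL0.le
        _ = L^(k+1) * b 2 := by ring
  have hbpos : ∀ k : ℕ, 0 ≤ b (2 + k) := by
    intro k
    have := key (2 + k) (by omega)
    linarith [this.1, this.2]
  -- squeeze
  have htend : Filter.Tendsto (fun k : ℕ => L^k * b 2) Filter.atTop (nhds 0) := by
    have := tendsto_pow_atTop_nhds_zero_of_lt_one hL0.le hL1
    simpa using this.mul_const (b 2)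
  have htend2 : Filter.Tendsto (fun k : ℕ => b (2 + k)) Filter.atTop (nhds 0) :=
    squeeze_zero hbpos geo htend
  have : Filter.Tendsto (fun k : ℕ => b (2 + k)) Filter.atTop (nhds 0) ↔
      Filter.Tendsto b Filter.atTop (nhds 0) := by
    rw [← Filter.tendsto_add_atTop_iff_nat (f := b) 2]
    simp [Nat.add_comm]
  exact this.1 htend2
end

section
/- If 1/3 < p < 1/2, then b_n + c_n ≤ (3/5)^{n-2} for all n ≥ 2; if 0 < p ≤ 1/3, then b_n + c_n ≤ (4/5)^{n-2} for all n ≥ 2. -/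
/-!
Both coordinates stay positive with `c n ≤ b n`, and the denominator dominates the linear
form `p (c (2 - p) + b (3 - 4p))`. Comparing the numerator of `b + c` with that linear form
times `r (b + c)`, the difference is a nonnegative quadratic form for `r = 4/5`, and equals
`p (3p - 1)(b² - c²)` for `r = 3/5`. Hence `b + c` contracts by the factor `r` at every step.
-/

namespace BCRecursion

def den (p B C : ℝ) : ℝ :=
  C*(2-p)*p + C^2*(1-2*p) + B^2*p*(2-3*p) + B*p*(3-4*p) + B*C*(2-6*p+6*p^2)

def numB (p B C : ℝ) : ℝ := p*(B*C*(2-3*p) + B^2*(1-p) + C^2*p)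

def numC (p B C : ℝ) : ℝ := p*(B*C + C^2*(1-p) + B^2*(1-2*p))

section OneStep

variable {p B C : ℝ}

lemma den_pos (hp : 0 < p) (hp' : p < 1/2) (hB : 0 ≤ B) (hC : 0 < C) : 0 < den p B C := by
  have hquad : 0 ≤ 2 - 6*p + 6*p^2 := by nlinarith [sq_nonneg (2*p - 1)]
  unfold den
  have : 0 < C*(2-p)*p := by positivity [show 0 < 2 - p by linarith]
  have : 0 ≤ C^2*(1-2*p) := mul_nonneg (sq_nonneg C) (by linarith)
  have : 0 ≤ B^2*p*(2-3*p) := mul_nonneg (by positivity) (by linarith)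
  have : 0 ≤ B*p*(3-4*p) := mul_nonneg (by positivity) (by linarith)
  have : 0 ≤ B*C*(2-6*p+6*p^2) := mul_nonneg (by positivity) hquad
  linarith

lemma linear_le_den (hp : 0 ≤ p) (hp' : p ≤ 1/2) (hB : 0 ≤ B) (hC : 0 ≤ C) :
    p*(C*(2-p) + B*(3-4*p)) ≤ den p B C := by
  have hquad : 0 ≤ 2 - 6*p + 6*p^2 := by nlinarith [sq_nonneg (2*p - 1)]
  unfold den
  have : 0 ≤ C^2*(1-2*p) := mul_nonneg (sq_nonneg C) (by linarith)
  have : 0 ≤ B^2*p*(2-3*p) := mul_nonneg (by positivity) (by linarith)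
  have : 0 ≤ B*C*(2-6*p+6*p^2) := mul_nonneg (by positivity) hquad
  linarith

lemma numC_pos (hp : 0 < p) (hp' : p < 1/2) (hB : 0 < B) (hC : 0 < C) : 0 < numC p B C := by
  unfold numC
  have : 0 ≤ C^2*(1-p) := mul_nonneg (sq_nonneg C) (by linarith)
  have : 0 ≤ B^2*(1-2*p) := mul_nonneg (sq_nonneg B) (by linarith)
  have : 0 < B*C := by positivity
  positivity [show 0 < B*C + C^2*(1-p) + B^2*(1-2*p) by linarith]

lemma numC_le_numB (hp : 0 ≤ p) (hp' : p ≤ 1/2) (hC : 0 ≤ C) (hCB : C ≤ B) :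
    numC p B C ≤ numB p B C := by
  have hdiff : numB p B C - numC p B C = p * ((B - C) * (p*B + (1-2*p)*C)) := by
    unfold numB numC; ring
  have : 0 ≤ p*B + (1-2*p)*C := by nlinarith
  nlinarith [mul_nonneg hp (mul_nonneg (sub_nonneg.2 hCB) this)]

lemma numB_add_numC_le_four_fifths (hp : 0 ≤ p) (hp' : p ≤ 1/2) (hB : 0 ≤ B) (hC : 0 ≤ C) :
    numB p B C + numC p B C ≤ 4/5 * (B+C) * (p*(C*(2-p) + B*(3-4*p))) := by
  have hdiff : 4/5 * (B+C) * (p*(C*(2-p) + B*(3-4*p))) - (numB p B C + numC p B C)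
      = p/5 * (B*C*(5-5*p) + B^2*(2-p) + C^2*(3-4*p)) := by
    unfold numB numC; ring
  have : 0 ≤ B*C*(5-5*p) := mul_nonneg (by positivity) (by linarith)
  have : 0 ≤ B^2*(2-p) := mul_nonneg (sq_nonneg B) (by linarith)
  have : 0 ≤ C^2*(3-4*p) := mul_nonneg (sq_nonneg C) (by linarith)
  nlinarith

lemma numB_add_numC_le_three_fifths (hp : 1/3 ≤ p) (hC : 0 ≤ C) (hCB : C ≤ B) :
    numB p B C + numC p B C ≤ 3/5 * (B+C) * (p*(C*(2-p) + B*(3-4*p))) := by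
  have hdiff : 3/5 * (B+C) * (p*(C*(2-p) + B*(3-4*p))) - (numB p B C + numC p B C)
      = p/5 * (3*p-1) * ((B - C) * (B + C)) := by
    unfold numB numC; ring
  have : 0 ≤ (B - C) * (B + C) := mul_nonneg (by linarith) (by linarith)
  nlinarith [mul_nonneg (mul_nonneg (show 0 ≤ p/5 by linarith) (show 0 ≤ 3*p-1 by linarith)) this]

end OneStep

section Sequence

variable {p : ℝ} {b c : ℕ → ℝ}

lemma pos_and_le_of_rec (hp : 0 < p) (hp' : p < 1/2)
    (hb : ∀ n, 2 ≤ n → b (n+1) = numB p (b n) (c n) / den p (b n) (c n))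
    (hc : ∀ n, 2 ≤ n → c (n+1) = numC p (b n) (c n) / den p (b n) (c n))
    (h2 : 0 < c 2 ∧ c 2 ≤ b 2) :
    ∀ n, 2 ≤ n → 0 < c n ∧ c n ≤ b n := by
  intro n hn
  induction n, hn using Nat.le_induction with
  | base => exact h2
  | succ n hn ih =>
    obtain ⟨hcpos, hcb⟩ := ih
    have hden := den_pos hp hp' (hcpos.le.trans hcb) hcpos
    rw [hb n hn, hc n hn, div_le_div_iff_of_pos_right hden]
    exact ⟨div_pos (numC_pos hp hp' (hcpos.trans_le hcb) hcpos) hden,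
      numC_le_numB hp.le hp'.le hcpos.le hcb⟩

lemma add_le_pow_of_rec (hp : 0 < p) (hp' : p < 1/2) {r : ℝ} (hr : 0 ≤ r)
    (hratio : ∀ B C : ℝ, 0 < C → C ≤ B →
      numB p B C + numC p B C ≤ r * (B+C) * (p*(C*(2-p) + B*(3-4*p))))
    (hb : ∀ n, 2 ≤ n → b (n+1) = numB p (b n) (c n) / den p (b n) (c n))
    (hc : ∀ n, 2 ≤ n → c (n+1) = numC p (b n) (c n) / den p (b n) (c n))
    (h2 : 0 < c 2 ∧ c 2 ≤ b 2) (h2sum : b 2 + c 2 ≤ 1) :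
    ∀ n, 2 ≤ n → b n + c n ≤ r^(n-2) := by
  have hstep : ∀ n, 2 ≤ n → b (n+1) + c (n+1) ≤ r * (b n + c n) := by
    intro n hn
    obtain ⟨hcpos, hcb⟩ := pos_and_le_of_rec hp hp' hb hc h2 n hn
    have hbpos := hcpos.trans_le hcb
    rw [hb n hn, hc n hn, ← add_div, div_le_iff₀ (den_pos hp hp' hbpos.le hcpos)]
    calc _ ≤ r * (b n + c n) * (p*(c n*(2-p) + b n*(3-4*p))) := hratio _ _ hcpos hcb
      _ ≤ r * (b n + c n) * den p (b n) (c n) := by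
        gcongr
        exact linear_le_den hp.le hp'.le hbpos.le hcpos.le
  intro n hn
  obtain ⟨k, rfl⟩ := Nat.exists_eq_add_of_le' hn
  have hgeom := le_geom (u := fun k => b (k+2) + c (k+2)) hr k
    (fun k _ => hstep (k+2) (by omega))
  simp only [Nat.add_sub_cancel, zero_add] at hgeom ⊢
  calc b (k+2) + c (k+2) ≤ r^k * (b 2 + c 2) := hgeom
    _ ≤ r^k := mul_le_of_le_one_right (by positivity) h2sum

end Sequence

end BCRecursion

open BCRecursion in
theorem stmt_12 (p : ℝ) (hp : 0 < p) (hp' : p < 1/2)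
(b c d : ℕ → ℝ)
    (hb2 : b 2 = (1 - p) / (5 - 7*p))
    (hc2 : c 2 = (1 - 2*p) / (5 - 7*p))
    (hd : ∀ n, 2 ≤ n → d n = c n*(2-p)*p + (c n)^2*(1-2*p) + (b n)^2*p*(2-3*p)
        + b n*p*(3-4*p) + b n * c n*(2-6*p+6*p^2))
    (hbrec : ∀ n, 2 ≤ n → b (n+1) = p*(b n * c n*(2-3*p) + (b n)^2*(1-p) + (c n)^2*p) / d n)
    (hcrec : ∀ n, 2 ≤ n → c (n+1) = p*(b n * c n + (c n)^2*(1-p) + (b n)^2*(1-2*p)) / d n) :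
    (1/3 < p → ∀ n, 2 ≤ n → b n + c n ≤ (3/5 : ℝ)^(n - 2)) ∧
    (p ≤ 1/3 → ∀ n, 2 ≤ n → b n + c n ≤ (4/5 : ℝ)^(n - 2)) := by
  have hb : ∀ n, 2 ≤ n → b (n+1) = numB p (b n) (c n) / den p (b n) (c n) := fun n hn => by
    rw [hbrec n hn, hd n hn]; rfl
  have hc : ∀ n, 2 ≤ n → c (n+1) = numC p (b n) (c n) / den p (b n) (c n) := fun n hn => by
    rw [hcrec n hn, hd n hn]; rfl
  have h57 : 0 < 5 - 7*p := by linarith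
  have h2 : 0 < c 2 ∧ c 2 ≤ b 2 := by
    rw [hb2, hc2]
    exact ⟨div_pos (by linarith) h57, div_le_div_of_nonneg_right (by linarith) h57.le⟩
  have h2sum : b 2 + c 2 ≤ 1 := by
    rw [hb2, hc2, ← add_div, div_le_one h57]; linarith
  refine ⟨fun h3 => ?_, fun _ => ?_⟩
  · exact add_le_pow_of_rec hp hp' (by norm_num)
      (fun B C hC hCB => numB_add_numC_le_three_fifths h3.le hC.le hCB) hb hc h2 h2sum
  · exact add_le_pow_of_rec hp hp' (by norm_num)
      (fun B C hC hCB => numB_add_numC_le_four_fifths hp.le hp'.le (hC.le.trans hCB) hC.le)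
      hb hc h2 h2sum
end

section
/- The sequence β_n converges to 2/5 as n → ∞. -/
theorem stmt_13 (p : ℝ) (hp : 0 < p) (hp' : p < 1/2)
(b c d : ℕ → ℝ)
    (hb2 : b 2 = (1 - p) / (5 - 7*p))
    (hc2 : c 2 = (1 - 2*p) / (5 - 7*p))
    (hd : ∀ n, 2 ≤ n → d n = c n*(2-p)*p + (c n)^2*(1-2*p) + (b n)^2*p*(2-3*p)
        + b n*p*(3-4*p) + b n * c n*(2-6*p+6*p^2))
    (hbrec : ∀ n, 2 ≤ n → b (n+1) = p*(b n * c n*(2-3*p) + (b n)^2*(1-p) + (c n)^2*p) / d n)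
    (hcrec : ∀ n, 2 ≤ n → c (n+1) = p*(b n * c n + (c n)^2*(1-p) + (b n)^2*(1-2*p)) / d n)
    (β : ℕ → ℝ)
    (hβ2 : β 2 = (1 - p) / (5 - 7*p))
    (hβrec : ∀ n, 2 ≤ n → β (n+1) = (b n + c n)*(1-p)*p / d n)
    (hpos : ∀ n, 2 ≤ n → 0 < b n ∧ 0 < c n ∧ 0 < d n)
    (hb0 : Filter.Tendsto b Filter.atTop (nhds 0))
    (hc0 : Filter.Tendsto c Filter.atTop (nhds 0))
    (hratio : Filter.Tendsto (fun n => b n / c n) Filter.atTop (nhds 1)) :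
    Filter.Tendsto β Filter.atTop (nhds (2/5)) := by
  have hp1 : p < 1 := hp'.trans (by norm_num)
  -- auxiliary function
  set g : ℕ → ℝ := fun n => ((b n / c n) + 1) * ((1-p)*p) /
      ((2-p)*p + c n*(1-2*p) + b n*(b n / c n)*(p*(2-3*p)) + (b n / c n)*(p*(3-4*p))
        + b n*(2-6*p+6*p^2)) with hg
  have hgl : Filter.Tendsto g Filter.atTop
      (nhds ((1 + 1) * ((1-p)*p) /
        ((2-p)*p + 0*(1-2*p) + 0*1*(p*(2-3*p)) + 1*(p*(3-4*p)) + 0*(2-6*p+6*p^2)))) := by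
    apply Filter.Tendsto.div
    · exact (hratio.add tendsto_const_nhds).mul tendsto_const_nhds
    · exact ((((tendsto_const_nhds.add (hc0.mul tendsto_const_nhds)).add
        (((hb0.mul hratio)).mul tendsto_const_nhds)).add
        (hratio.mul tendsto_const_nhds)).add (hb0.mul tendsto_const_nhds))
    · have h5 : (5:ℝ)*p*(1-p) ≠ 0 := ne_of_gt (by nlinarith)
      intro h
      apply h5
      nlinarith [h]
  have hval : ((1:ℝ) + 1) * ((1-p)*p) /
        ((2-p)*p + 0*(1-2*p) + 0*1*(p*(2-3*p)) + 1*(p*(3-4*p)) + 0*(2-6*p+6*p^2)) = 2/5 := by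
    rw [div_eq_iff (by nlinarith : ((2-p)*p + 0*(1-2*p) + 0*1*(p*(2-3*p)) + 1*(p*(3-4*p)) + 0*(2-6*p+6*p^2)) ≠ 0)]
    ring
  rw [hval] at hgl
  have heq : ∀ᶠ n in Filter.atTop, g n = β (n+1) := by
    filter_upwards [Filter.eventually_ge_atTop 2] with n hn
    obtain ⟨hbp, hcp, hdp⟩ := hpos n hn
    rw [hβrec n hn, hd n hn, hg]
    field_simp
  have h1 : Filter.Tendsto (fun n => β (n+1)) Filter.atTop (nhds (2/5)) :=
    hgl.congr' heq
  exact (Filter.tendsto_add_atTop_iff_nat 1).mp h1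
end

section
/- The sequences α_n, β_n, γ_n converge to 2/5, 2/5, and 1/5 respectively as n → ∞. -/
/-!
In the coordinates `s = b + c`, `t = (b - c)/(b + c)` one step of the recursion multiplies `s` by
at most `4/5` and multiplies `t` by the Möbius factor `((1-p) + (3p-1)t) / ((3-3p) + (1-3p)t)`,
which on `[-1, 1]` lies between its endpoint values `1 - 2p` and `p/(2 - 3p)`, both `< 1`. Hence
`(s, t) → (0, 0)` geometrically. The numerators of `α, β, γ` and the denominator `d` are `s` times
polynomials in `(s, t)`; after cancelling `s` the limits are these polynomials at `(0, 0)`, and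
`d / s → 5p(1 - p)/2`.
-/

open Filter Topology

namespace BCRecursion

variable {p b c s x : ℝ}

noncomputable def denom (p b c : ℝ) : ℝ :=
  c*(2-p)*p + c^2*(1-2*p) + b^2*p*(2-3*p) + b*p*(3-4*p) + b*c*(2-6*p+6*p^2)

noncomputable def nextB (p b c : ℝ) : ℝ := p*(b*c*(2-3*p) + b^2*(1-p) + c^2*p) / denom p b c

noncomputable def nextC (p b c : ℝ) : ℝ := p*(b*c + c^2*(1-p) + b^2*(1-2*p)) / denom p b c

/-- `denom p b c / s` in the coordinates `b = s(1+t)/2`, `c = s(1-t)/2`. -/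
noncomputable def denomST (p s t : ℝ) : ℝ :=
  p*(2-p)*(1-t)/2 + p*(3-4*p)*(1+t)/2
    + s*((1-2*p)*(1-t)^2 + p*(2-3*p)*(1+t)^2 + (2-6*p+6*p^2)*(1-t^2))/4

lemma denom_eq_mul_denomST (p s t : ℝ) :
    denom p (s*(1+t)/2) (s*(1-t)/2) = s * denomST p s t := by
  unfold denom denomST; ring

lemma denom_pos (hp : 0 < p) (hp' : p < 1/2) (hb : 0 < b) (hc : 0 < c) : 0 < denom p b c := by
  have : 0 < 2-6*p+6*p^2 := by nlinarith
  unfold denom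
  apply_rules [sub_pos.mpr, add_pos, mul_pos, pow_pos] <;> linarith

lemma nextB_pos (hp : 0 < p) (hp' : p < 1/2) (hb : 0 < b) (hc : 0 < c) : 0 < nextB p b c := by
  unfold nextB
  apply_rules [div_pos, denom_pos, sub_pos.mpr, add_pos, mul_pos, pow_pos] <;> linarith

lemma nextC_pos (hp : 0 < p) (hp' : p < 1/2) (hb : 0 < b) (hc : 0 < c) : 0 < nextC p b c := by
  unfold nextC
  apply_rules [div_pos, denom_pos, sub_pos.mpr, add_pos, mul_pos, pow_pos] <;> linarith

lemma nextB_add_nextC (p b c : ℝ) : nextB p b c + nextC p b c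
    = p*(b+c)*((3-3*p)*(b+c) + (1-3*p)*(b-c)) / (2*denom p b c) := by
  unfold nextB nextC; ring

lemma nextB_sub_nextC (p b c : ℝ) : nextB p b c - nextC p b c
    = p*(b-c)*((1-p)*(b+c) + (3*p-1)*(b-c)) / (2*denom p b c) := by
  unfold nextB nextC; ring

lemma nextB_add_nextC_le (hp : 0 < p) (hp' : p < 1/2) (hb : 0 < b) (hc : 0 < c) :
    nextB p b c + nextC p b c ≤ 4/5 * (b+c) := by
  have hd := denom_pos hp hp' hb hc
  rw [nextB_add_nextC, div_le_iff₀ (by linarith)]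
  have h6 : 0 < 2-6*p+6*p^2 := by nlinarith
  have key : 5*p*((3-3*p)*(b+c) + (1-3*p)*(b-c)) ≤ 8*denom p b c := by
    unfold denom
    nlinarith [mul_pos hp hb, mul_pos hp hc, mul_pos (mul_pos hb hc) h6,
      mul_pos (pow_pos hc 2) (by linarith : (0:ℝ) < 1-2*p),
      mul_pos (mul_pos (pow_pos hb 2) hp) (by linarith : (0:ℝ) < 2-3*p)]
  nlinarith [add_pos hb hc]

noncomputable def rate (p : ℝ) : ℝ := max (1-2*p) (p/(2-3*p))

lemma rate_nonneg (hp' : p < 1/2) : 0 ≤ rate p :=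
  le_max_of_le_left (by linarith)

lemma rate_lt_one (hp : 0 < p) (hp' : p < 1/2) : rate p < 1 :=
  max_lt (by linarith) ((div_lt_one (by linarith)).mpr (by linarith))

lemma abs_factor_le_rate_mul (hp : 0 < p) (hp' : p < 1/2) (hx : |x| ≤ s) :
    |(1-p)*s + (3*p-1)*x| ≤ rate p * ((3-3*p)*s + (1-3*p)*x) := by
  have h23 : 0 < 2-3*p := by linarith
  have hq0 := rate_nonneg hp'
  have hqa : 1-2*p ≤ rate p := le_max_left _ _
  have hqb : p ≤ rate p * (2-3*p) := (div_le_iff₀ h23).mp (le_max_right _ _)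
  rw [abs_le] at hx ⊢
  have hA : 0 ≤ (rate p*(2-3*p) - p)*(s+x) := mul_nonneg (by linarith) (by linarith)
  have hB : 0 ≤ (rate p - (1-2*p))*(s-x) := mul_nonneg (by linarith) (by linarith)
  have hA' : 0 ≤ (rate p*(2-3*p) + p)*(s+x) := mul_nonneg (by positivity) (by linarith)
  have hB' : 0 ≤ (rate p + (1-2*p))*(s-x) := mul_nonneg (by linarith) (by linarith)
  constructor <;> nlinarith

lemma abs_next_sub_div_next_add_le (hp : 0 < p) (hp' : p < 1/2) (hb : 0 < b) (hc : 0 < c) :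
    |nextB p b c - nextC p b c| / (nextB p b c + nextC p b c) ≤ rate p * (|b - c| / (b + c)) := by
  have hd := denom_pos hp hp' hb hc
  have hs : 0 < b + c := add_pos hb hc
  have hx : |b - c| ≤ b + c := abs_sub_le_iff.mpr ⟨by linarith, by linarith⟩
  have hF := abs_factor_le_rate_mul hp hp' hx
  have hG : 0 < (3-3*p)*(b+c) + (1-3*p)*(b-c) := by
    rw [abs_le] at hx; nlinarith
  rw [nextB_sub_nextC, nextB_add_nextC, abs_div, abs_mul, abs_mul, abs_of_pos hp,
    abs_of_pos (by linarith : 0 < 2 * denom p b c)]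
  calc p * |b - c| * |(1-p)*(b+c) + (3*p-1)*(b-c)| / (2 * denom p b c)
        / (p*(b+c)*((3-3*p)*(b+c) + (1-3*p)*(b-c)) / (2*denom p b c))
      = |b - c| / (b + c) * (|(1-p)*(b+c) + (3*p-1)*(b-c)| / ((3-3*p)*(b+c) + (1-3*p)*(b-c))) := by
        field_simp
    _ ≤ |b - c| / (b + c) * rate p := by
        gcongr
        exact (div_le_iff₀ hG).mpr hF
    _ = rate p * (|b - c| / (b + c)) := mul_comm _ _

lemma tendsto_zero_of_succ_le_mul {u : ℕ → ℝ} {r : ℝ} (hu : ∀ n, 0 ≤ u n) (hr0 : 0 ≤ r)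
    (hr1 : r < 1) (h : ∀ n, u (n+1) ≤ r * u n) : Tendsto u atTop (𝓝 0) :=
  squeeze_zero hu (fun n => le_geom hr0 n fun k _ => h k)
    (by simpa using (tendsto_pow_atTop_nhds_zero_of_lt_one hr0 hr1).mul_const (u 0))

section Sequence

variable {b c : ℕ → ℝ}

lemma pos_of_rec (hp : 0 < p) (hp' : p < 1/2) (hb0 : 0 < b 0) (hc0 : 0 < c 0)
    (hb : ∀ n, b (n+1) = nextB p (b n) (c n)) (hc : ∀ n, c (n+1) = nextC p (b n) (c n)) (n : ℕ) :
    0 < b n ∧ 0 < c n := by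
  induction n with
  | zero => exact ⟨hb0, hc0⟩
  | succ n ih =>
    rw [hb, hc]
    exact ⟨nextB_pos hp hp' ih.1 ih.2, nextC_pos hp hp' ih.1 ih.2⟩

lemma tendsto_add_of_rec (hp : 0 < p) (hp' : p < 1/2) (hpos : ∀ n, 0 < b n ∧ 0 < c n)
    (hb : ∀ n, b (n+1) = nextB p (b n) (c n)) (hc : ∀ n, c (n+1) = nextC p (b n) (c n)) :
    Tendsto (fun n => b n + c n) atTop (𝓝 0) := by
  refine tendsto_zero_of_succ_le_mul (r := 4/5) (fun n => by linarith [hpos n]) (by norm_num)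
    (by norm_num) fun n => ?_
  rw [hb, hc]
  exact nextB_add_nextC_le hp hp' (hpos n).1 (hpos n).2

lemma tendsto_sub_div_add_of_rec (hp : 0 < p) (hp' : p < 1/2) (hpos : ∀ n, 0 < b n ∧ 0 < c n)
    (hb : ∀ n, b (n+1) = nextB p (b n) (c n)) (hc : ∀ n, c (n+1) = nextC p (b n) (c n)) :
    Tendsto (fun n => (b n - c n) / (b n + c n)) atTop (𝓝 0) := by
  have h : Tendsto (fun n => |b n - c n| / (b n + c n)) atTop (𝓝 0) := by
    refine tendsto_zero_of_succ_le_mul (fun n => div_nonneg (abs_nonneg _) (by linarith [hpos n]))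
      (rate_nonneg hp') (rate_lt_one hp hp') fun n => ?_
    rw [hb, hc]
    exact abs_next_sub_div_next_add_le hp hp' (hpos n).1 (hpos n).2
  refine (tendsto_zero_iff_abs_tendsto_zero _).mpr (h.congr fun n => ?_)
  rw [Function.comp_apply, abs_div, abs_of_pos (add_pos (hpos n).1 (hpos n).2)]

end Sequence

lemma div_denom_eq {num N : ℝ → ℝ → ℝ} (hnum : ∀ s t, num (s*(1+t)/2) (s*(1-t)/2) = s * N s t)
    (hbc : b + c ≠ 0) :
    num b c / denom p b c = N (b+c) ((b-c)/(b+c)) / denomST p (b+c) ((b-c)/(b+c)) := by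
  have hb : (b+c) * (1 + (b-c)/(b+c)) / 2 = b := by field_simp; ring
  have hc : (b+c) * (1 - (b-c)/(b+c)) / 2 = c := by field_simp; ring
  rw [← mul_div_mul_left (N _ _) _ hbc, ← hnum, ← denom_eq_mul_denomST, hb, hc]

lemma tendsto_div_denom (hp0 : p ≠ 0) (hp1 : p ≠ 1) {num N : ℝ → ℝ → ℝ}
    (hN : Continuous fun x : ℝ × ℝ => N x.1 x.2)
    (hnum : ∀ s t, num (s*(1+t)/2) (s*(1-t)/2) = s * N s t) {b c : ℕ → ℝ}
    (hbc : ∀ n, b n + c n ≠ 0) (hs : Tendsto (fun n => b n + c n) atTop (𝓝 0))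
    (ht : Tendsto (fun n => (b n - c n) / (b n + c n)) atTop (𝓝 0)) :
    Tendsto (fun n => num (b n) (c n) / denom p (b n) (c n)) atTop
      (𝓝 (N 0 0 / (5*p*(1-p)/2))) := by
  have hD : Continuous fun x : ℝ × ℝ => denomST p x.1 x.2 := by unfold denomST; fun_prop
  have hD0 : denomST p 0 0 = 5*p*(1-p)/2 := by unfold denomST; ring
  have hD0_ne : 5*p*(1-p)/2 ≠ 0 :=
    div_ne_zero (mul_ne_zero (mul_ne_zero (by norm_num) hp0) (sub_ne_zero.mpr hp1.symm)) two_ne_zero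
  have hst := hs.prodMk_nhds ht
  have hlim := ((hN.tendsto (0, 0)).comp hst).div ((hD.tendsto (0, 0)).comp hst) (hD0 ▸ hD0_ne)
  rw [hD0] at hlim
  exact hlim.congr fun n => (div_denom_eq hnum (hbc n)).symm

end BCRecursion

open BCRecursion

theorem stmt_14_general (p : ℝ) (hp : 0 < p) (hp' : p < 1/2)
(b c d : ℕ → ℝ)
    (hb2 : b 2 = (1 - p) / (5 - 7*p))
    (hc2 : c 2 = (1 - 2*p) / (5 - 7*p))
    (hd : ∀ n, 2 ≤ n → d n = c n*(2-p)*p + (c n)^2*(1-2*p) + (b n)^2*p*(2-3*p)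
        + b n*p*(3-4*p) + b n * c n*(2-6*p+6*p^2))
    (hbrec : ∀ n, 2 ≤ n → b (n+1) = p*(b n * c n*(2-3*p) + (b n)^2*(1-p) + (c n)^2*p) / d n)
    (hcrec : ∀ n, 2 ≤ n → c (n+1) = p*(b n * c n + (c n)^2*(1-p) + (b n)^2*(1-2*p)) / d n)
    (α β γ : ℕ → ℝ)
    (hαrec : ∀ n, 2 ≤ n → α (n+1) = ((b n + c n)*(1-p)*p + (c n)^2*(1-2*p)
        + (b n)^2*p*(2-3*p) + b n * c n*(2 - 6*p*(1-p))) / d n)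
    (hβrec : ∀ n, 2 ≤ n → β (n+1) = (b n + c n)*(1-p)*p / d n)
    (hγrec : ∀ n, 2 ≤ n → γ (n+1) = p*(b n*(1-2*p) + c n * p) / d n) :
    Filter.Tendsto α Filter.atTop (nhds (2/5)) ∧
    Filter.Tendsto β Filter.atTop (nhds (2/5)) ∧
    Filter.Tendsto γ Filter.atTop (nhds (1/5)) := by
  set B : ℕ → ℝ := fun m => b (m+2)
  set C : ℕ → ℝ := fun m => c (m+2)
  have hB : ∀ m, B (m+1) = nextB p (B m) (C m) := fun m => by
    rw [show B (m+1) = b (m+2+1) from rfl, hbrec _ (by omega), hd _ (by omega)]; rfl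
  have hC : ∀ m, C (m+1) = nextC p (B m) (C m) := fun m => by
    rw [show C (m+1) = c (m+2+1) from rfl, hcrec _ (by omega), hd _ (by omega)]; rfl
  have hpos := pos_of_rec hp hp' (show 0 < b 2 by rw [hb2]; apply div_pos <;> linarith)
    (show 0 < c 2 by rw [hc2]; apply div_pos <;> linarith) hB hC
  have hs := tendsto_add_of_rec hp hp' hpos hB hC
  have ht := tendsto_sub_div_add_of_rec hp hp' hpos hB hC
  have hlim : ∀ {f : ℕ → ℝ} {num N : ℝ → ℝ → ℝ} {L : ℝ},
      Continuous (fun x : ℝ × ℝ => N x.1 x.2) →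
      (∀ s t, num (s*(1+t)/2) (s*(1-t)/2) = s * N s t) →
      (∀ n, 2 ≤ n → f (n+1) = num (b n) (c n) / d n) →
      N 0 0 / (5*p*(1-p)/2) = L → Tendsto f atTop (𝓝 L) := by
    intro f num N L hN hnum hf hL
    rw [← tendsto_add_atTop_iff_nat 3, ← hL]
    refine (tendsto_div_denom hp.ne' (by linarith) hN hnum
      (fun m => (add_pos (hpos m).1 (hpos m).2).ne') hs ht).congr fun m => ?_
    rw [show f (m+3) = f (m+2+1) from rfl, hf _ (by omega), hd _ (by omega)]; rfl
  have hp1 : 1 - p ≠ 0 := by linarith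
  refine ⟨hlim (num := fun b c => (b+c)*(1-p)*p + c^2*(1-2*p) + b^2*p*(2-3*p)
        + b*c*(2-6*p*(1-p)))
      (N := fun s t => (1-p)*p
        + s*((1-t)^2*(1-2*p) + (1+t)^2*p*(2-3*p) + (1-t^2)*(2-6*p*(1-p)))/4)
      (by fun_prop) (fun s t => by ring) hαrec (by field_simp; ring),
    hlim (num := fun b c => (b+c)*(1-p)*p) (N := fun _ _ => (1-p)*p)
      (by fun_prop) (fun s t => by ring) hβrec (by field_simp),
    hlim (num := fun b c => p*(b*(1-2*p) + c*p)) (N := fun _ t => p*((1+t)/2*(1-2*p) + (1-t)/2*p))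
      (by fun_prop) (fun s t => by ring) hγrec (by field_simp; ring)⟩

theorem stmt_14 (p : ℝ) (hp : 0 < p) (hp' : p < 1/2)
(b c d : ℕ → ℝ)
    (hb2 : b 2 = (1 - p) / (5 - 7*p))
    (hc2 : c 2 = (1 - 2*p) / (5 - 7*p))
    (hd : ∀ n, 2 ≤ n → d n = c n*(2-p)*p + (c n)^2*(1-2*p) + (b n)^2*p*(2-3*p)
        + b n*p*(3-4*p) + b n * c n*(2-6*p+6*p^2))
    (hbrec : ∀ n, 2 ≤ n → b (n+1) = p*(b n * c n*(2-3*p) + (b n)^2*(1-p) + (c n)^2*p) / d n)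
    (hcrec : ∀ n, 2 ≤ n → c (n+1) = p*(b n * c n + (c n)^2*(1-p) + (b n)^2*(1-2*p)) / d n)
    (α β γ : ℕ → ℝ)
    (hα2 : α 2 = (3 - 4*p) / (5 - 7*p))
    (hβ2 : β 2 = (1 - p) / (5 - 7*p))
    (hγ2 : γ 2 = (1 - 2*p) / (5 - 7*p))
    (hαrec : ∀ n, 2 ≤ n → α (n+1) = ((b n + c n)*(1-p)*p + (c n)^2*(1-2*p)
        + (b n)^2*p*(2-3*p) + b n * c n*(2 - 6*p*(1-p))) / d n)
    (hβrec : ∀ n, 2 ≤ n → β (n+1) = (b n + c n)*(1-p)*p / d n)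
    (hγrec : ∀ n, 2 ≤ n → γ (n+1) = p*(b n*(1-2*p) + c n * p) / d n) :
    Filter.Tendsto α Filter.atTop (nhds (2/5)) ∧
    Filter.Tendsto β Filter.atTop (nhds (2/5)) ∧
    Filter.Tendsto γ Filter.atTop (nhds (1/5)) :=
  stmt_14_general p hp hp' b c d hb2 hc2 hd hbrec hcrec α β γ hαrec hβrec hγrec
end

section
/- For all n ≥ 2, α_n + β_n + γ_n = 1. -/
lemma div_add_div_add_div_eq_one {x y z w : ℝ} (hw : w ≠ 0) (hsum : x + y + z = w) :
    x / w + y / w + z / w = 1 := by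
  rw [← add_div, ← add_div, hsum, div_self hw]

theorem stmt_15_general (p : ℝ) (hp' : p < 1/2)
(b c d : ℕ → ℝ)
    (hd : ∀ n, 2 ≤ n → d n = c n*(2-p)*p + (c n)^2*(1-2*p) + (b n)^2*p*(2-3*p)
        + b n*p*(3-4*p) + b n * c n*(2-6*p+6*p^2))
    (α β γ : ℕ → ℝ)
    (hα2 : α 2 = (3 - 4*p) / (5 - 7*p))
    (hβ2 : β 2 = (1 - p) / (5 - 7*p))
    (hγ2 : γ 2 = (1 - 2*p) / (5 - 7*p))
    (hαrec : ∀ n, 2 ≤ n → α (n+1) = ((b n + c n)*(1-p)*p + (c n)^2*(1-2*p)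
        + (b n)^2*p*(2-3*p) + b n * c n*(2 - 6*p*(1-p))) / d n)
    (hβrec : ∀ n, 2 ≤ n → β (n+1) = (b n + c n)*(1-p)*p / d n)
    (hγrec : ∀ n, 2 ≤ n → γ (n+1) = p*(b n*(1-2*p) + c n * p) / d n)
    (hdpos : ∀ n, 2 ≤ n → 0 < d n) :
    ∀ n, 2 ≤ n → α n + β n + γ n = 1 := by
  intro n hn
  rcases hn.eq_or_lt with rfl | hlt
  · rw [hα2, hβ2, hγ2]
    exact div_add_div_add_div_eq_one (by linarith) (by ring)
  · obtain ⟨m, hm, rfl⟩ : ∃ m, 2 ≤ m ∧ n = m + 1 := ⟨n - 1, by omega, by omega⟩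
    rw [hαrec m hm, hβrec m hm, hγrec m hm]
    exact div_add_div_add_div_eq_one (hdpos m hm).ne' (by rw [hd m hm]; ring)

theorem stmt_15 (p : ℝ) (hp : 0 < p) (hp' : p < 1/2)
(b c d : ℕ → ℝ)
    (hb2 : b 2 = (1 - p) / (5 - 7*p))
    (hc2 : c 2 = (1 - 2*p) / (5 - 7*p))
    (hd : ∀ n, 2 ≤ n → d n = c n*(2-p)*p + (c n)^2*(1-2*p) + (b n)^2*p*(2-3*p)
        + b n*p*(3-4*p) + b n * c n*(2-6*p+6*p^2))
    (hbrec : ∀ n, 2 ≤ n → b (n+1) = p*(b n * c n*(2-3*p) + (b n)^2*(1-p) + (c n)^2*p) / d n)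
    (hcrec : ∀ n, 2 ≤ n → c (n+1) = p*(b n * c n + (c n)^2*(1-p) + (b n)^2*(1-2*p)) / d n)
    (α β γ : ℕ → ℝ)
    (hα2 : α 2 = (3 - 4*p) / (5 - 7*p))
    (hβ2 : β 2 = (1 - p) / (5 - 7*p))
    (hγ2 : γ 2 = (1 - 2*p) / (5 - 7*p))
    (hαrec : ∀ n, 2 ≤ n → α (n+1) = ((b n + c n)*(1-p)*p + (c n)^2*(1-2*p)
        + (b n)^2*p*(2-3*p) + b n * c n*(2 - 6*p*(1-p))) / d n)
    (hβrec : ∀ n, 2 ≤ n → β (n+1) = (b n + c n)*(1-p)*p / d n)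
    (hγrec : ∀ n, 2 ≤ n → γ (n+1) = p*(b n*(1-2*p) + c n * p) / d n)
    (hdpos : ∀ n, 2 ≤ n → 0 < d n) :
    ∀ n, 2 ≤ n → α n + β n + γ n = 1 :=
  stmt_15_general p hp' b c d hd α β γ hα2 hβ2 hγ2 hαrec hβrec hγrec hdpos
end

section
/- For p ∈ (0, 1/2) and n ≥ 2, if b_{n+1} ≥ c_{n+1}, then |b_{n+1}/c_{n+1} - 1| ≤ (1-p)·|b_n/c_n - 1|, given b_n ≥ c_n > 0. -/
/-!
Writing `N_b = bc(2-3p) + b²(1-p) + c²p` and `N_c = bc + c²(1-p) + b²(1-2p)`, the common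
factor `p / d` cancels in `b'/c' = N_b / N_c`, and `N_b - N_c = (b - c)(pb + (1-2p)c)`.
The contraction by `1 - p` is then the polynomial inequality `c (pb + (1-2p)c) ≤ (1-p) N_c`,
whose slack `(1-2p)bc + p²c² + (1-p)(1-2p)b²` is a sum of nonnegative terms for `p ≤ 1/2`.
-/

section UpdateStep

variable {p b c : ℝ}

lemma update_denom_pos (hp : 0 < p) (hp' : p < 1/2) (hb : 0 < b) (hc : 0 < c) :
    0 < c*(2-p)*p + c^2*(1-2*p) + b^2*p*(2-3*p) + b*p*(3-4*p) + b*c*(2-6*p+6*p^2) := by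
  have hquad : 0 < 2 - 6*p + 6*p^2 := by nlinarith [sq_nonneg (p - 1/2)]
  have h1 : 0 < 2 - p := by linarith
  have h2 : 0 < 1 - 2*p := by linarith
  have h3 : 0 < 2 - 3*p := by linarith
  have h4 : 0 < 3 - 4*p := by linarith
  positivity

lemma update_numC_pos (hp' : p ≤ 1/2) (hb : 0 < b) (hc : 0 < c) :
    0 < b*c + c^2*(1-p) + b^2*(1-2*p) := by
  have h1 : 0 ≤ 1 - p := by linarith
  have h2 : 0 ≤ 1 - 2*p := by linarith
  positivity

lemma update_ratio_sub_one {d : ℝ} (hp : p ≠ 0) (hd : d ≠ 0)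
    (hN : b*c + c^2*(1-p) + b^2*(1-2*p) ≠ 0) :
    (p*(b*c*(2-3*p) + b^2*(1-p) + c^2*p) / d) / (p*(b*c + c^2*(1-p) + b^2*(1-2*p)) / d) - 1
      = (b - c) * (p*b + (1-2*p)*c) / (b*c + c^2*(1-p) + b^2*(1-2*p)) := by
  rw [div_div_div_cancel_right₀ hd, mul_div_mul_left _ _ hp, div_sub_one hN]
  ring

lemma update_contraction (hp' : p ≤ 1/2) (hb : 0 ≤ b) (hc : 0 ≤ c) :
    c * (p*b + (1-2*p)*c) ≤ (1-p) * (b*c + c^2*(1-p) + b^2*(1-2*p)) := by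
  have h1 : 0 ≤ 1 - p := by linarith
  have h2 : 0 ≤ 1 - 2*p := by linarith
  have slack : 0 ≤ (1-2*p)*b*c + p^2*c^2 + (1-p)*(1-2*p)*b^2 := by positivity
  linear_combination slack

end UpdateStep

theorem stmt_19_general (p b c : ℝ) (hp : 0 < p) (hp' : p < 1/2) (hc : 0 < c) (hbc : c ≤ b)
    (d b' c' : ℝ)
    (hd : d = c*(2-p)*p + c^2*(1-2*p) + b^2*p*(2-3*p) + b*p*(3-4*p) + b*c*(2-6*p+6*p^2))
    (hb' : b' = p*(b*c*(2-3*p) + b^2*(1-p) + c^2*p) / d)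
    (hc' : c' = p*(b*c + c^2*(1-p) + b^2*(1-2*p)) / d) :
    |b'/c' - 1| ≤ (1-p) * |b/c - 1| := by
  have hb : 0 < b := hc.trans_le hbc
  have hd0 : 0 < d := hd ▸ update_denom_pos hp hp' hb hc
  have hN := update_numC_pos hp'.le hb hc
  have hM : 0 < p*b + (1-2*p)*c := by
    have : 0 < 1 - 2*p := by linarith
    positivity
  rw [hb', hc', update_ratio_sub_one hp.ne' hd0.ne' hN.ne', div_sub_one hc.ne']
  calc |(b - c) * (p*b + (1-2*p)*c) / (b*c + c^2*(1-p) + b^2*(1-2*p))|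
      = |b - c| * ((p*b + (1-2*p)*c) / (b*c + c^2*(1-p) + b^2*(1-2*p))) := by
        rw [abs_div, abs_mul, abs_of_pos hM, abs_of_pos hN, mul_div_assoc]
    _ ≤ |b - c| * ((1 - p) / c) := by
        gcongr |b - c| * ?_
        rw [div_le_div_iff₀ hN hc]
        linarith [update_contraction hp'.le hb.le hc.le]
    _ = (1 - p) * |(b - c) / c| := by
        rw [abs_div, abs_of_pos hc]
        ring

theorem stmt_19 (p b c : ℝ) (hp : 0 < p) (hp' : p < 1/2) (hc : 0 < c) (hbc : c ≤ b)
    (d b' c' : ℝ)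
    (hd : d = c*(2-p)*p + c^2*(1-2*p) + b^2*p*(2-3*p) + b*p*(3-4*p) + b*c*(2-6*p+6*p^2))
    (hb' : b' = p*(b*c*(2-3*p) + b^2*(1-p) + c^2*p) / d)
    (hc' : c' = p*(b*c + c^2*(1-p) + b^2*(1-2*p)) / d)
    (h : c' ≤ b') :
    |b'/c' - 1| ≤ (1-p) * |b/c - 1| :=
  stmt_19_general p b c hp hp' hc hbc d b' c' hd hb' hc'
end
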